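/- Bertram's nested wall theorem in the (s,q)-model, case ch₀ ≠ 0 (Corollary 2.9, first bullet): in a frame (H,γ,u) with ch = (x, y₁H + y₂γ + δ, z), x ≠ 0, and ch' = (r, c₁H + c₂γ + δ', χ') with xc₁ − ry₁ ≠ 0, setting q := (s² + t²)/2, the wall condition Re Z_{tH,sH+uγ}(ch')·Im Z_{tH,sH+uγ}(ch) = Re Z_{tH,sH+uγ}(ch)·Im Z_{tH,sH+uγ}(ch') (for t > 0) holds if and only if q = C·(s − y₁/x) + (1/2)(y₁²/x² − F), where F := (d/g)(u − y₂/x)² + (1/(x²g))(y₁²g − y₂²d − 2xz); in particular all potential walls in the (s,q)-plane are semi-lines through the fixed point (y₁/x, (1/2)(y₁²/x² − F)), which is independent of ch'. -/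

import Mathlib

noncomputable section

variable {V : Type*} [AddCommGroup V] [Module ℝ V]

/-- The Mukai pairing on `ℝ × V × ℝ`. -/
def mukaiPair (B : V →ₗ[ℝ] V →ₗ[ℝ] ℝ) (K : V) (w v : ℝ × V × ℝ) : ℝ :=
  B w.2.1 v.2.1 - w.1 * (v.2.2 - (1/2) * B v.2.1 K)
    - v.1 * (w.2.2 + (1/2) * B w.2.1 K) - (1/8) * w.1 * v.1 * B K K

/-- The Mukai vector of a Chern character. -/
def mukaiVec (B : V →ₗ[ℝ] V →ₗ[ℝ] ℝ) (K : V) (χ : ℝ) (ch : ℝ × V × ℝ) : ℝ × V × ℝ :=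
  (ch.1, ch.2.1 - ((1/4 : ℝ) * ch.1) • K,
    ch.2.2 - (1/4) * B ch.2.1 K + (1/2) * ch.1 * (χ - (1/16) * B K K))

/-- Real part of the central charge `Z_{ω,β}(ch)`. -/
def ZRe (B : V →ₗ[ℝ] V →ₗ[ℝ] ℝ) (ω β : V) (ch : ℝ × V × ℝ) : ℝ :=
  -ch.2.2 + B ch.2.1 β - (ch.1 / 2) * (B β β - B ω ω)

/-- Imaginary part of the central charge `Z_{ω,β}(ch)`. -/
def ZIm (B : V →ₗ[ℝ] V →ₗ[ℝ] ℝ) (ω β : V) (ch : ℝ × V × ℝ) : ℝ :=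
  B ch.2.1 ω - ch.1 * B β ω

/-- Real part of the vector `℧_{Z_{ω,β}}`. -/
def mhoRe (B : V →ₗ[ℝ] V →ₗ[ℝ] ℝ) (K : V) (χ : ℝ) (ω β : V) : ℝ × V × ℝ :=
  (1, β - (3/4 : ℝ) • K,
    -(1/2) * B ω ω + (1/2) * B (β - (3/4 : ℝ) • K) (β - (3/4 : ℝ) • K)
      - (1/2) * (χ - (1/8) * B K K))

/-- Imaginary part of the vector `℧_{Z_{ω,β}}`. -/
def mhoIm (B : V →ₗ[ℝ] V →ₗ[ℝ] ℝ) (K : V) (ω β : V) : ℝ × V × ℝ :=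
  (0, ω, B (β - (3/4 : ℝ) • K) ω)

/-- The Bayer–Macrì vector `w_{ω,β}(ch)`. -/
def wBM (B : V →ₗ[ℝ] V →ₗ[ℝ] ℝ) (K : V) (χ : ℝ) (ω β : V) (ch : ℝ × V × ℝ) :
    ℝ × V × ℝ :=
  ZIm B ω β ch • mhoRe B K χ ω β - ZRe B ω β ch • mhoIm B K ω β

/-!
In the frame, `Re Z(ch)` depends on `t` only through `s² - t² = 2 s² - 2 q`, and `Im Z(ch)` is
`t g` times an affine function of `s`. In `Re Z(ch') Im Z(ch) - Re Z(ch) Im Z(ch')` the terms in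
`s³` and `s q` cancel, leaving `-t g² (x c₁ - r y₁)` times `q - C (s - y₁/x) - ½ (y₁²/x² - F)`.
The base point of the line is the formal zero of `Z(ch)` (with `t² = -F`), which is why it does
not depend on `ch'`.
-/

section Frame

variable {B : V →ₗ[ℝ] V →ₗ[ℝ] ℝ} {H γ δ : V}

theorem ZIm_frame (hγH : B γ H = 0) (hδH : B δ H = 0) (t s u x y₁ y₂ z : ℝ) :
    ZIm B (t • H) (s • H + u • γ) (x, y₁ • H + y₂ • γ + δ, z) = t * B H H * (y₁ - x * s) := by
  simp only [ZIm, map_add, map_smul, LinearMap.add_apply, LinearMap.smul_apply, smul_eq_mul,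
    hγH, hδH]
  ring

theorem ZRe_frame {g d : ℝ} (hg : B H H = g) (hd : B γ γ = -d) (hHγ : B H γ = 0)
    (hγH : B γ H = 0) (hδH : B δ H = 0) (hδγ : B δ γ = 0) (t s u x y₁ y₂ z : ℝ) :
    ZRe B (t • H) (s • H + u • γ) (x, y₁ • H + y₂ • γ + δ, z) =
      -z + y₁ * s * g - y₂ * u * d - x / 2 * (s ^ 2 * g - u ^ 2 * d - t ^ 2 * g) := by
  simp only [ZRe, map_add, map_smul, LinearMap.add_apply, LinearMap.smul_apply, smul_eq_mul,
    hg, hd, hHγ, hγH, hδH, hδγ]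
  ring

end Frame

theorem wall_eq_iff_sq_line {g d t s u x y₁ y₂ z r c₁ c₂ χ' C F : ℝ} (hg : g ≠ 0) (ht : t ≠ 0)
    (hx : x ≠ 0) (hden : x * c₁ - r * y₁ ≠ 0)
    (hC : C = (x * χ' - r * z + u * d * (x * c₂ - r * y₂)) / (g * (x * c₁ - r * y₁)))
    (hF : F = (d / g) * (u - y₂ / x) ^ 2 + (1 / (x ^ 2 * g)) * (y₁ ^ 2 * g - y₂ ^ 2 * d - 2 * x * z)) :
    (-χ' + c₁ * s * g - c₂ * u * d - r / 2 * (s ^ 2 * g - u ^ 2 * d - t ^ 2 * g)) *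
          (t * g * (y₁ - x * s)) =
        (-z + y₁ * s * g - y₂ * u * d - x / 2 * (s ^ 2 * g - u ^ 2 * d - t ^ 2 * g)) *
          (t * g * (c₁ - r * s)) ↔
      (s ^ 2 + t ^ 2) / 2 = C * (s - y₁ / x) + (1 / 2) * (y₁ ^ 2 / x ^ 2 - F) := by
  have cross_eq :
      (-χ' + c₁ * s * g - c₂ * u * d - r / 2 * (s ^ 2 * g - u ^ 2 * d - t ^ 2 * g)) *
            (t * g * (y₁ - x * s)) -
          (-z + y₁ * s * g - y₂ * u * d - x / 2 * (s ^ 2 * g - u ^ 2 * d - t ^ 2 * g)) *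
            (t * g * (c₁ - r * s)) =
        -(t * g ^ 2 * (x * c₁ - r * y₁)) *
          ((s ^ 2 + t ^ 2) / 2 - (C * (s - y₁ / x) + (1 / 2) * (y₁ ^ 2 / x ^ 2 - F))) := by
    subst hC hF
    -- `field_simp` only clears the denominator `x c₁ - r y₁` once it is an atom.
    generalize hD : x * c₁ - r * y₁ = D at hden ⊢
    field_simp
    subst hD
    ring
  have hfactor : -(t * g ^ 2 * (x * c₁ - r * y₁)) ≠ 0 := by
    simp [ht, hg, hden]
  rw [← sub_eq_zero, cross_eq, mul_eq_zero, or_iff_right hfactor, sub_eq_zero]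

theorem nested_wall_sq_model_rank_nonzero_general
    (B : V →ₗ[ℝ] V →ₗ[ℝ] ℝ) (hB : ∀ v w : V, B v w = B w v)
    (H γ : V) (u g d : ℝ)
    (hg : g = B H H) (hgpos : 0 < g) (hHγ : B H γ = 0)
    (hd : d = -(B γ γ))
    (x y₁ y₂ z r c₁ c₂ χ' : ℝ) (δ δ' : V)
    (hδH : B δ H = 0) (hδγ : B δ γ = 0) (hδ'H : B δ' H = 0) (hδ'γ : B δ' γ = 0)
    (hx : x ≠ 0) (hden : x * c₁ - r * y₁ ≠ 0)
    (C F : ℝ)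
    (hC : C = (x * χ' - r * z + u * d * (x * c₂ - r * y₂)) / (g * (x * c₁ - r * y₁)))
    (hF : F = (d/g) * (u - y₂/x)^2 + (1/(x^2*g)) * (y₁^2*g - y₂^2*d - 2*x*z)) :
    ∀ s t : ℝ, 0 < t →
      ((ZRe B (t • H) (s • H + u • γ) (r, c₁ • H + c₂ • γ + δ', χ') *
          ZIm B (t • H) (s • H + u • γ) (x, y₁ • H + y₂ • γ + δ, z) =
        ZRe B (t • H) (s • H + u • γ) (x, y₁ • H + y₂ • γ + δ, z) *
          ZIm B (t • H) (s • H + u • γ) (r, c₁ • H + c₂ • γ + δ', χ')) ↔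
        (s^2 + t^2) / 2 = C * (s - y₁/x) + (1/2) * (y₁^2/x^2 - F)) := by
  intro s t ht
  have hγH : B γ H = 0 := (hB γ H).trans hHγ
  have hγγ : B γ γ = -d := by rw [hd, neg_neg]
  rw [ZRe_frame hg.symm hγγ hHγ hγH hδ'H hδ'γ, ZRe_frame hg.symm hγγ hHγ hγH hδH hδγ,
    ZIm_frame hγH hδH, ZIm_frame hγH hδ'H, ← hg]
  exact wall_eq_iff_sq_line hgpos.ne' ht.ne' hx hden hC hF

/-- Bertram's nested wall theorem in the `(s,q)`-model, case `ch₀ ≠ 0`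
(Corollary 2.9, first bullet). -/
theorem nested_wall_sq_model_rank_nonzero
    (B : V →ₗ[ℝ] V →ₗ[ℝ] ℝ) (hB : ∀ v w : V, B v w = B w v)
    (H γ : V) (u g d : ℝ)
    (hg : g = B H H) (hgpos : 0 < g) (hHγ : B H γ = 0)
    (hd : d = -(B γ γ)) (hdnn : 0 ≤ d) (hu : 0 ≤ u)
    (x y₁ y₂ z r c₁ c₂ χ' : ℝ) (δ δ' : V)
    (hδH : B δ H = 0) (hδγ : B δ γ = 0) (hδ'H : B δ' H = 0) (hδ'γ : B δ' γ = 0)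
    (hx : x ≠ 0) (hden : x * c₁ - r * y₁ ≠ 0)
    (C F : ℝ)
    (hC : C = (x * χ' - r * z + u * d * (x * c₂ - r * y₂)) / (g * (x * c₁ - r * y₁)))
    (hF : F = (d/g) * (u - y₂/x)^2 + (1/(x^2*g)) * (y₁^2*g - y₂^2*d - 2*x*z)) :
    ∀ s t : ℝ, 0 < t →
      ((ZRe B (t • H) (s • H + u • γ) (r, c₁ • H + c₂ • γ + δ', χ') *
          ZIm B (t • H) (s • H + u • γ) (x, y₁ • H + y₂ • γ + δ, z) =
        ZRe B (t • H) (s • H + u • γ) (x, y₁ • H + y₂ • γ + δ, z) *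
          ZIm B (t • H) (s • H + u • γ) (r, c₁ • H + c₂ • γ + δ', χ')) ↔
        (s^2 + t^2) / 2 = C * (s - y₁/x) + (1/2) * (y₁^2/x^2 - F)) :=
  nested_wall_sq_model_rank_nonzero_general B hB H γ u g d hg hgpos hHγ hd x y₁ y₂ z r c₁ c₂ χ' δ δ'
    hδH hδγ hδ'H hδ'γ hx hden C F hC hF
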